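/- The control-function coefficient ρ̂_cf := (V̂^⊤M_X V̂)^{-1} V̂^⊤ M_X Y₂ is a linear transformation of the OLS–2SLS difference: ρ̂_cf = (Y₁^⊤M_Z Y₁)^{-1}(Y₁^⊤M_{Z₁}Y₁)(β̂_ols − β̂_{2sls}). -/

import Mathlib

open Matrix

noncomputable def proj {n : ℕ} {m : Type*} [Fintype m] [DecidableEq m]
    (A : Matrix (Fin n) m ℝ) : Matrix (Fin n) (Fin n) ℝ :=
  A * (Aᵀ * A)⁻¹ * Aᵀ

noncomputable def annih {n : ℕ} {m : Type*} [Fintype m] [DecidableEq m]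
    (A : Matrix (Fin n) m ℝ) : Matrix (Fin n) (Fin n) ℝ :=
  1 - proj A

section helpers

variable {n : ℕ} {m : Type*} [Fintype m] [DecidableEq m]

lemma proj_transpose (A : Matrix (Fin n) m ℝ) : (proj A)ᵀ = proj A := by
  unfold proj
  rw [transpose_mul, transpose_mul, transpose_transpose, transpose_nonsing_inv,
    transpose_mul, transpose_transpose, Matrix.mul_assoc]

lemma annih_transpose (A : Matrix (Fin n) m ℝ) : (annih A)ᵀ = annih A := by
  unfold annih
  rw [transpose_sub, transpose_one, proj_transpose]

lemma proj_mul_self (A : Matrix (Fin n) m ℝ) [Invertible (Aᵀ * A)] :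
    proj A * A = A := by
  unfold proj
  rw [Matrix.mul_assoc, Matrix.mul_assoc,
    Matrix.inv_mul_of_invertible, Matrix.mul_one]

lemma annih_mul_self (A : Matrix (Fin n) m ℝ) [Invertible (Aᵀ * A)] :
    annih A * A = 0 := by
  unfold annih
  rw [Matrix.sub_mul, Matrix.one_mul, proj_mul_self, sub_self]

lemma annih_mul_proj (A : Matrix (Fin n) m ℝ) {m' : Type*} [Fintype m'] [DecidableEq m']
    (B : Matrix (Fin n) m' ℝ) [Invertible (Aᵀ * A)] (h : annih A * B = 0) :
    annih A * proj B = 0 := by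
  unfold proj
  rw [← Matrix.mul_assoc, ← Matrix.mul_assoc, h, Matrix.zero_mul, Matrix.zero_mul]

lemma annih_mul_annih (A : Matrix (Fin n) m ℝ) {m' : Type*} [Fintype m'] [DecidableEq m']
    (B : Matrix (Fin n) m' ℝ) [Invertible (Aᵀ * A)] (h : annih A * B = 0) :
    annih A * annih B = annih A := by
  unfold annih
  rw [Matrix.mul_sub, Matrix.mul_one, show (1 : Matrix (Fin n) (Fin n) ℝ) - proj A = annih A from rfl,
    annih_mul_proj A B h, sub_zero]

end helpers

theorem stmt_9 {n d k₁ k₂ : ℕ}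
    (Y₁ : Matrix (Fin n) (Fin d) ℝ) (Y₂ : Matrix (Fin n) (Fin 1) ℝ)
    (Z₁ : Matrix (Fin n) (Fin k₁) ℝ) (Z₂ : Matrix (Fin n) (Fin k₂) ℝ)
    (Z : Matrix (Fin n) (Fin k₁ ⊕ Fin k₂) ℝ) (hZ : Z = fromCols Z₁ Z₂)
    (X : Matrix (Fin n) (Fin d ⊕ Fin k₁) ℝ) (hX : X = fromCols Y₁ Z₁)
    (Vhat : Matrix (Fin n) (Fin d) ℝ) (hV : Vhat = annih Z * Y₁)
    (hZZ : Invertible (Zᵀ * Z)) (hZ₁Z₁ : Invertible (Z₁ᵀ * Z₁))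
    (hXX : Invertible (Xᵀ * X))
    (hYMZY : Invertible (Y₁ᵀ * annih Z * Y₁))
    (hYMY : Invertible (Y₁ᵀ * annih Z₁ * Y₁))
    (hYPY : Invertible (Y₁ᵀ * (proj Z - proj Z₁) * Y₁))
    (hVMV : Invertible (Vhatᵀ * annih X * Vhat))
    (βols β2sls ρcf : Matrix (Fin d) (Fin 1) ℝ)
    (hβols : βols = (Y₁ᵀ * annih Z₁ * Y₁)⁻¹ * (Y₁ᵀ * annih Z₁ * Y₂))
    (hβ2sls : β2sls = (Y₁ᵀ * (proj Z - proj Z₁) * Y₁)⁻¹ *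
      (Y₁ᵀ * (proj Z - proj Z₁) * Y₂))
    (hρ : ρcf = (Vhatᵀ * annih X * Vhat)⁻¹ * (Vhatᵀ * annih X * Y₂)) :
    ρcf = (Y₁ᵀ * annih Z * Y₁)⁻¹ * (Y₁ᵀ * annih Z₁ * Y₁) * (βols - β2sls) := by
  haveI := hZZ; haveI := hZ₁Z₁; haveI := hXX
  haveI := hYMZY; haveI := hYMY; haveI := hYPY
  -- basic orthogonality facts
  have hZ1eq : Z₁ = Z * fromRows (1 : Matrix (Fin k₁) (Fin k₁) ℝ)
      (0 : Matrix (Fin k₂) (Fin k₁) ℝ) := by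
    rw [hZ, fromCols_mul_fromRows, Matrix.mul_one, Matrix.mul_zero, add_zero]
  have hMZZ1 : annih Z * Z₁ = 0 := by
    rw [hZ1eq, ← Matrix.mul_assoc, annih_mul_self, Matrix.zero_mul]
  have hY1eqX : Y₁ = X * fromRows (1 : Matrix (Fin d) (Fin d) ℝ)
      (0 : Matrix (Fin k₁) (Fin d) ℝ) := by
    rw [hX, fromCols_mul_fromRows, Matrix.mul_one, Matrix.mul_zero, add_zero]
  have hZ1eqX : Z₁ = X * fromRows (0 : Matrix (Fin d) (Fin k₁) ℝ)
      (1 : Matrix (Fin k₁) (Fin k₁) ℝ) := by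
    rw [hX, fromCols_mul_fromRows, Matrix.mul_zero, Matrix.mul_one, zero_add]
  have hMXY1 : annih X * Y₁ = 0 := by
    rw [hY1eqX, ← Matrix.mul_assoc, annih_mul_self, Matrix.zero_mul]
  have hMXZ1 : annih X * Z₁ = 0 := by
    rw [hZ1eqX, ← Matrix.mul_assoc, annih_mul_self, Matrix.zero_mul]
  have hMZidem : annih Z * annih Z = annih Z := annih_mul_annih Z Z (annih_mul_self Z)
  have hMZM1 : annih Z * annih Z₁ = annih Z := annih_mul_annih Z Z₁ hMZZ1
  have hM1MZ : annih Z₁ * annih Z = annih Z := by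
    have h := congrArg Matrix.transpose hMZM1
    rwa [transpose_mul, annih_transpose, annih_transpose] at h
  have hMXM1 : annih X * annih Z₁ = annih X := annih_mul_annih X Z₁ hMXZ1
  have e1 : annih Z * (annih Z * Y₁) = annih Z * Y₁ := by
    rw [← Matrix.mul_assoc, hMZidem]
  have e2 : annih Z₁ * (annih Z * Y₁) = annih Z * Y₁ := by
    rw [← Matrix.mul_assoc, hM1MZ]
  -- symmetry facts
  have hAt : (Y₁ᵀ * annih Z * Y₁)ᵀ = Y₁ᵀ * annih Z * Y₁ := by
    rw [transpose_mul, transpose_mul, transpose_transpose, annih_transpose,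
      ← Matrix.mul_assoc]
  have hSt : (Y₁ᵀ * annih Z₁ * Y₁)ᵀ = Y₁ᵀ * annih Z₁ * Y₁ := by
    rw [transpose_mul, transpose_mul, transpose_transpose, annih_transpose,
      ← Matrix.mul_assoc]
  -- the control-function residual regressor
  set c0 : Matrix (Fin d) (Fin d) ℝ :=
    (Y₁ᵀ * annih Z₁ * Y₁)⁻¹ * (Y₁ᵀ * annih Z * Y₁) with hc0
  set u : Matrix (Fin n) (Fin d) ℝ := annih Z * Y₁ - annih Z₁ * Y₁ * c0 with hu
  have hY1u : Y₁ᵀ * u = 0 := by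
    rw [hu, Matrix.mul_sub]
    simp only [← Matrix.mul_assoc]
    rw [hc0, ← Matrix.mul_assoc, Matrix.mul_inv_of_invertible, Matrix.one_mul, sub_self]
  have hZ1MZ : Z₁ᵀ * annih Z = 0 := by
    have h := congrArg Matrix.transpose hMZZ1
    rwa [transpose_mul, annih_transpose, transpose_zero] at h
  have hZ1M1 : Z₁ᵀ * annih Z₁ = 0 := by
    have h := congrArg Matrix.transpose (annih_mul_self Z₁)
    rwa [transpose_mul, annih_transpose, transpose_zero] at h
  have hZ1u : Z₁ᵀ * u = 0 := by
    rw [hu, Matrix.mul_sub]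
    simp only [← Matrix.mul_assoc]
    rw [hZ1MZ, hZ1M1, Matrix.zero_mul, Matrix.zero_mul, sub_self]
  have hXu : Xᵀ * u = 0 := by
    rw [hX, transpose_fromCols, fromRows_mul, hY1u, hZ1u, fromRows_zero]
  have hPXu : proj X * u = 0 := by
    unfold proj
    rw [Matrix.mul_assoc, hXu, Matrix.mul_zero]
  have hMXu : annih X * u = u := by
    unfold annih
    rw [Matrix.sub_mul, Matrix.one_mul, hPXu, sub_zero]
  have hMXrest : annih X * (annih Z₁ * Y₁ * c0) = 0 := by
    simp only [← Matrix.mul_assoc]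
    rw [hMXM1, hMXY1, Matrix.zero_mul]
  have key : annih X * (annih Z * Y₁) = u := by
    have hsplit : annih Z * Y₁ = u + annih Z₁ * Y₁ * c0 := by
      rw [hu, sub_add_cancel]
    rw [hsplit, Matrix.mul_add, hMXu, hMXrest, add_zero]
  have hVMX : Vhatᵀ * annih X = uᵀ := by
    have h := congrArg Matrix.transpose key
    rw [transpose_mul, annih_transpose] at h
    rw [hV]; exact h
  have hutEq : uᵀ = Y₁ᵀ * annih Z -
      Y₁ᵀ * annih Z * Y₁ * ((Y₁ᵀ * annih Z₁ * Y₁)⁻¹ * (Y₁ᵀ * annih Z₁)) := by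
    rw [hu, hc0]
    simp only [transpose_sub, transpose_mul, transpose_nonsing_inv, annih_transpose,
      transpose_transpose, Matrix.mul_assoc]
  -- abbreviations (statement forms)
  have hD : Y₁ᵀ * (proj Z - proj Z₁) * Y₁ =
      Y₁ᵀ * annih Z₁ * Y₁ - Y₁ᵀ * annih Z * Y₁ := by
    rw [show proj Z - proj Z₁ = annih Z₁ - annih Z from by unfold annih; abel,
      Matrix.mul_sub, Matrix.sub_mul]
  have hbc : Y₁ᵀ * annih Z * Y₂ =
      Y₁ᵀ * annih Z₁ * Y₂ - Y₁ᵀ * (proj Z - proj Z₁) * Y₂ := by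
    rw [show annih Z = annih Z₁ - (proj Z - proj Z₁) from by unfold annih; abel,
      Matrix.mul_sub, Matrix.sub_mul]
  haveI hS'' : Invertible (Y₁ᵀ * (annih Z₁ * Y₁)) := by
    rw [← Matrix.mul_assoc]; exact hYMY
  haveI hA'' : Invertible (Y₁ᵀ * (annih Z * Y₁)) := by
    rw [← Matrix.mul_assoc]; exact hYMZY
  have cancelS : ∀ {j : ℕ} (w : Matrix (Fin d) (Fin j) ℝ),
      Y₁ᵀ * (annih Z₁ * (Y₁ * ((Y₁ᵀ * (annih Z₁ * Y₁))⁻¹ * w))) = w := by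
    intro j w
    have h : Y₁ᵀ * (annih Z₁ * (Y₁ * ((Y₁ᵀ * (annih Z₁ * Y₁))⁻¹ * w))) =
        (Y₁ᵀ * (annih Z₁ * Y₁)) * ((Y₁ᵀ * (annih Z₁ * Y₁))⁻¹ * w) := by
      simp only [Matrix.mul_assoc]
    rw [h, Matrix.mul_inv_cancel_left_of_invertible]
  have hden : uᵀ * Vhat =
      (Y₁ᵀ * annih Z₁ * Y₁ - Y₁ᵀ * annih Z * Y₁) *
        ((Y₁ᵀ * annih Z₁ * Y₁)⁻¹ * (Y₁ᵀ * annih Z * Y₁)) := by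
    rw [hV, hutEq]
    simp only [Matrix.sub_mul, Matrix.mul_assoc, e1, e2, cancelS,
      Matrix.mul_inv_cancel_left_of_invertible]
  have hnum : uᵀ * Y₂ =
      (Y₁ᵀ * annih Z₁ * Y₁ - Y₁ᵀ * annih Z * Y₁) *
        ((Y₁ᵀ * annih Z₁ * Y₁)⁻¹ * (Y₁ᵀ * annih Z₁ * Y₂)) -
      Y₁ᵀ * (proj Z - proj Z₁) * Y₂ := by
    have h1 : Y₁ᵀ * annih Z * Y₂ =
        Y₁ᵀ * annih Z₁ * Y₂ - Y₁ᵀ * (proj Z - proj Z₁) * Y₂ := hbc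
    rw [hutEq, Matrix.sub_mul]
    rw [show (Y₁ᵀ * annih Z) * Y₂ = Y₁ᵀ * annih Z * Y₂ from rfl, h1]
    simp only [Matrix.sub_mul, Matrix.mul_assoc, cancelS,
      Matrix.mul_inv_cancel_left_of_invertible]
    abel
  haveI hinvSA : Invertible (Y₁ᵀ * annih Z₁ * Y₁ - Y₁ᵀ * annih Z * Y₁) := hD ▸ hYPY
  rw [hρ, hβols, hβ2sls, hD, hVMX, hden, hnum]
  haveI hSA'' : Invertible (Y₁ᵀ * (annih Z₁ * Y₁) - Y₁ᵀ * (annih Z * Y₁)) := by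
    rw [← Matrix.mul_assoc, ← Matrix.mul_assoc]; exact hinvSA
  rw [Matrix.mul_inv_rev, Matrix.mul_inv_rev,
    Matrix.nonsing_inv_nonsing_inv _ (Matrix.isUnit_det_of_invertible _)]
  simp only [Matrix.mul_sub, Matrix.mul_assoc, cancelS,
    Matrix.inv_mul_cancel_left_of_invertible, Matrix.mul_inv_cancel_left_of_invertible]
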